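/- A monotone path in ℝ² from p to q avoiding an open axis-aligned rectangle R whose interior intersects the segment [p,q] must pass through a point of the boundary of R; in fact it must pass weakly below the lower-right corner or weakly above the upper-left corner of R. -/
import Mathlib


open Set

/-- A monotone (componentwise nondecreasing) continuous path in `ℝ²` from `p` to `q`
avoiding the open axis-aligned rectangle `R = (a,b) × (c,d)`, where the segment `[p,q]`
meets `R`, must pass weakly below the lower-right corner `(b,c)` of `R` or weakly above
the upper-left corner `(a,d)` of `R`. -/
theorem stmt7 (a b c d : ℝ) (p q : ℝ × ℝ)
    (γ : ℝ → ℝ × ℝ)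
    (hcont : ContinuousOn γ (Icc 0 1))
    (hmono1 : MonotoneOn (fun τ => (γ τ).1) (Icc 0 1))
    (hmono2 : MonotoneOn (fun τ => (γ τ).2) (Icc 0 1))
    (h0 : γ 0 = p) (h1 : γ 1 = q)
    (havoid : ∀ τ ∈ Icc (0:ℝ) 1, γ τ ∉ Ioo a b ×ˢ Ioo c d)
    (hseg : ∃ x ∈ segment ℝ p q, x ∈ Ioo a b ×ˢ Ioo c d) :
    (∃ τ ∈ Icc (0:ℝ) 1, b ≤ (γ τ).1 ∧ (γ τ).2 ≤ c) ∨
    (∃ τ ∈ Icc (0:ℝ) 1, (γ τ).1 ≤ a ∧ d ≤ (γ τ).2) := by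
  by_contra hcon
  push_neg at hcon
  obtain ⟨hno1, hno2⟩ := hcon
  obtain ⟨x, hxseg, hxR⟩ := hseg
  obtain ⟨hx1, hx2⟩ := hxR
  simp only [mem_Ioo] at hx1 hx2
  have h01 : (0:ℝ) ∈ Icc (0:ℝ) 1 := by constructor <;> norm_num
  have h11 : (1:ℝ) ∈ Icc (0:ℝ) 1 := by constructor <;> norm_num
  have hab : a < b := lt_trans hx1.1 hx1.2
  have hcd : c < d := lt_trans hx2.1 hx2.2
  -- segment coordinate bounds
  obtain ⟨u, v, hu, hv, huv, hx⟩ := hxseg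
  have hpq1 : p.1 ≤ q.1 := by
    have := hmono1 h01 h11 (by norm_num)
    simpa [h0, h1] using this
  have hpq2 : p.2 ≤ q.2 := by
    have := hmono2 h01 h11 (by norm_num)
    simpa [h0, h1] using this
  have huv' : u = 1 - v := by linarith
  subst huv'
  have he1 : x.1 = (1 - v) * p.1 + v * q.1 := by rw [← hx]; simp
  have he2 : x.2 = (1 - v) * p.2 + v * q.2 := by rw [← hx]; simp
  have hx1p : p.1 ≤ x.1 := by nlinarith [mul_nonneg hv (sub_nonneg.2 hpq1)]
  have hx1q : x.1 ≤ q.1 := by nlinarith [mul_nonneg hu (sub_nonneg.2 hpq1), mul_nonneg hv (sub_nonneg.2 hpq1)]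
  have hx2p : p.2 ≤ x.2 := by nlinarith [mul_nonneg hv (sub_nonneg.2 hpq2)]
  have hx2q : x.2 ≤ q.2 := by nlinarith [mul_nonneg hu (sub_nonneg.2 hpq2), mul_nonneg hv (sub_nonneg.2 hpq2)]
  -- the two closed sets
  set U : Set ℝ := Icc 0 1 ∩ γ ⁻¹' ((Iic a ×ˢ (univ : Set ℝ)) ∪ ((univ : Set ℝ) ×ˢ Iic c)) with hU
  set V : Set ℝ := Icc 0 1 ∩ γ ⁻¹' ((Ici b ×ˢ (univ : Set ℝ)) ∪ ((univ : Set ℝ) ×ˢ Ici d)) with hV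
  have hUc : IsClosed U :=
    hcont.preimage_isClosed_of_isClosed isClosed_Icc
      (((isClosed_Iic.prod isClosed_univ)).union (isClosed_univ.prod isClosed_Iic))
  have hVc : IsClosed V :=
    hcont.preimage_isClosed_of_isClosed isClosed_Icc
      (((isClosed_Ici.prod isClosed_univ)).union (isClosed_univ.prod isClosed_Ici))
  have hcover : Icc (0:ℝ) 1 ⊆ U ∪ V := by
    intro τ hτ
    have := havoid τ hτ
    simp only [mem_prod, mem_Ioo, not_and, not_lt, not_and_or, not_le] at this
    simp only [hU, hV, mem_union, mem_inter_iff, mem_preimage, mem_prod, mem_Iic, mem_Ici,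
      mem_univ, and_true, true_and]
    rcases lt_or_ge a (γ τ).1 with ha' | ha'
    · rcases lt_or_ge (γ τ).1 b with hb' | hb'
      · rcases lt_or_ge c (γ τ).2 with hc' | hc'
        · rcases lt_or_ge (γ τ).2 d with hd' | hd'
          · exfalso
            exact absurd ⟨⟨ha', hb'⟩, hc', hd'⟩ (havoid τ hτ)
          · right; exact ⟨hτ, Or.inr hd'⟩
        · left; exact ⟨hτ, Or.inr hc'⟩
      · right; exact ⟨hτ, Or.inl hb'⟩
    · left; exact ⟨hτ, Or.inl ha'⟩
  have hUne : (Icc (0:ℝ) 1 ∩ U).Nonempty := by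
    refine ⟨0, h01, h01, ?_⟩
    have hp : γ 0 ∉ Ioo a b ×ˢ Ioo c d := havoid 0 h01
    rw [h0] at hp
    have hp1 : p.1 < b := lt_of_le_of_lt hx1p hx1.2
    have hp2 : p.2 < d := lt_of_le_of_lt hx2p hx2.2
    simp only [mem_preimage, h0, mem_union, mem_prod, mem_Iic, mem_univ, and_true, true_and]
    rcases lt_or_ge a p.1 with ha' | ha'
    · rcases lt_or_ge c p.2 with hc' | hc'
      · exact absurd ⟨⟨ha', hp1⟩, hc', hp2⟩ hp
      · exact Or.inr hc'
    · exact Or.inl ha'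
  have hVne : (Icc (0:ℝ) 1 ∩ V).Nonempty := by
    refine ⟨1, h11, h11, ?_⟩
    have hq1 : a < q.1 := lt_of_lt_of_le hx1.1 hx1q
    have hq2 : c < q.2 := lt_of_lt_of_le hx2.1 hx2q
    simp only [mem_preimage, h1, mem_union, mem_prod, mem_Ici, mem_univ, and_true, true_and]
    rcases lt_or_ge q.1 b with hb' | hb'
    · rcases lt_or_ge q.2 d with hd' | hd'
      · exfalso
        have := havoid 1 h11
        rw [h1] at this
        exact this ⟨⟨hq1, hb'⟩, hq2, hd'⟩
      · exact Or.inr hd'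
    · exact Or.inl hb'
  obtain ⟨τ, hτI, hτU, hτV⟩ :=
    isPreconnected_closed_iff.1 isPreconnected_Icc U V hUc hVc hcover hUne hVne
  obtain ⟨-, hτU'⟩ := hτU
  obtain ⟨-, hτV'⟩ := hτV
  simp only [mem_preimage, mem_union, mem_prod, mem_Iic, mem_Ici, mem_univ, and_true,
    true_and] at hτU' hτV'
  rcases hτU' with hA | hA <;> rcases hτV' with hB | hB
  · linarith
  · exact absurd hB (not_le.2 (hno2 τ hτI hA))
  · exact absurd hA (not_le.2 (hno1 τ hτI hB))
  · linarith
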